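/- Fix μ ∈ ℝ. Then the unconditional error σ ↦ E(μ, σ) = ∫₀¹ Φ(−|μ − log u| / σ) du is a continuous and strictly increasing function of σ on (0, ∞), and 0 < E(μ, σ) < 1/2 for every σ > 0. -/

import Mathlib

open MeasureTheory

/-- The standard normal cumulative distribution function. -/
noncomputable def Phi (x : ℝ) : ℝ :=
  ∫ t in Set.Iic x, Real.exp (-t^2/2) / Real.sqrt (2 * Real.pi)

namespace PhiAux

noncomputable def f (t : ℝ) : ℝ := Real.exp (-t^2/2) / Real.sqrt (2 * Real.pi)

lemma f_pos (t : ℝ) : 0 < f t :=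
  div_pos (Real.exp_pos _) (Real.sqrt_pos.mpr (by positivity))

lemma f_integrable : Integrable f := by
  have h := integrable_exp_neg_mul_sq (b := (1:ℝ)/2) (by norm_num)
  have : f = fun t => Real.exp (-((1:ℝ)/2) * t ^ 2) * (Real.sqrt (2 * Real.pi))⁻¹ := by
    funext t
    simp only [f, div_eq_mul_inv]
    ring_nf
  rw [this]
  exact h.mul_const _

lemma f_continuous : Continuous f := by
  apply Continuous.div_const
  exact Real.continuous_exp.comp (by continuity)

lemma Phi_eq (x : ℝ) : Phi x = ∫ t in Set.Iic x, f t := rfl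

lemma Phi_sub (a b : ℝ) : Phi b - Phi a = ∫ t in a..b, f t := by
  rw [Phi_eq, Phi_eq]
  exact intervalIntegral.integral_Iic_sub_Iic f_integrable.integrableOn f_integrable.integrableOn

lemma Phi_strictMono : StrictMono Phi := by
  intro a b hab
  have h : 0 < ∫ t in a..b, f t :=
    intervalIntegral.intervalIntegral_pos_of_pos_on f_integrable.intervalIntegrable
      (fun x _ => f_pos x) hab
  linarith [Phi_sub a b]

lemma Phi_pos (x : ℝ) : 0 < Phi x := by
  rw [Phi_eq]
  rw [setIntegral_pos_iff_support_of_nonneg_ae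
    (Filter.Eventually.of_forall fun t => (f_pos t).le) f_integrable.integrableOn]
  have : Function.support f ∩ Set.Iic x = Set.Iic x := by
    rw [Set.inter_eq_right]
    intro t _
    exact (f_pos t).ne'
  rw [this]
  simp [Real.volume_Iic]

lemma Phi_zero : Phi 0 = 1/2 := by
  have htot : ∫ t : ℝ, f t = 1 := by
    have h := integral_gaussian (1/2 : ℝ)
    have h2 : Real.sqrt (Real.pi / (1/2)) = Real.sqrt (2 * Real.pi) := by
      rw [div_div_eq_mul_div, div_one, mul_comm]
    have : (fun t : ℝ => Real.exp (-(1/2 : ℝ) * t ^ 2)) =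
        fun t : ℝ => Real.exp (-t^2/2) := by
      funext t; ring_nf
    rw [this, h2] at h
    have hne : Real.sqrt (2 * Real.pi) ≠ 0 := by positivity
    simp only [f]
    rw [integral_div, h, div_self hne]
  have hsym : ∫ t in Set.Iic (0:ℝ), f t = ∫ t in Set.Ioi (0:ℝ), f t := by
    have h := integral_comp_neg_Iic (c := (0:ℝ)) (f := f)
    rw [neg_zero] at h
    rw [← h]
    congr 1
    funext t
    simp only [f]
    ring_nf
  have hsplit : (∫ t in Set.Iic (0:ℝ), f t) + (∫ t in Set.Ioi (0:ℝ), f t) = ∫ t : ℝ, f t :=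
    intervalIntegral.integral_Iic_add_Ioi f_integrable.integrableOn f_integrable.integrableOn
  rw [Phi_eq]
  rw [htot] at hsplit
  linarith [hsplit, hsym]

lemma Phi_le_half {x : ℝ} (hx : x ≤ 0) : Phi x ≤ 1/2 := by
  rw [← Phi_zero]; exact Phi_strictMono.monotone hx

lemma Phi_lt_half {x : ℝ} (hx : x < 0) : Phi x < 1/2 := by
  rw [← Phi_zero]; exact Phi_strictMono hx

lemma Phi_continuous : Continuous Phi := by
  have h : Phi = fun x => (∫ t in (0:ℝ)..x, f t) + Phi 0 := by
    funext x
    have := Phi_sub 0 x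
    linarith
  rw [h]
  exact (f_integrable.continuous_primitive 0).add continuous_const

end PhiAux

open PhiAux in
/-- For fixed `μ`, the unconditional error `σ ↦ ∫₀¹ Φ(−|μ − log u|/σ) du` is
continuous and strictly increasing on `(0, ∞)`, with values in `(0, 1/2)`. -/
theorem unconditional_error_monotone (μ : ℝ) :
    ContinuousOn (fun σ : ℝ => ∫ u in (0:ℝ)..1, Phi (-|μ - Real.log u| / σ))
        (Set.Ioi 0) ∧
    StrictMonoOn (fun σ : ℝ => ∫ u in (0:ℝ)..1, Phi (-|μ - Real.log u| / σ))
        (Set.Ioi 0) ∧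
    ∀ σ : ℝ, 0 < σ →
      0 < (∫ u in (0:ℝ)..1, Phi (-|μ - Real.log u| / σ))
        ∧ (∫ u in (0:ℝ)..1, Phi (-|μ - Real.log u| / σ)) < 1/2 := by
  set F : ℝ → ℝ → ℝ := fun σ u => Phi (-|μ - Real.log u| / σ) with hF
  -- measurability
  have hmeas : ∀ σ : ℝ, AEStronglyMeasurable (F σ) (volume.restrict (Set.uIoc (0:ℝ) 1)) := by
    intro σ
    exact (Phi_continuous.measurable.comp
      (((measurable_const.sub Real.measurable_log).abs.neg).div_const σ)).aestronglyMeasurable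
  -- basic bounds on F
  have harg_nonpos : ∀ σ : ℝ, 0 < σ → ∀ u : ℝ, -|μ - Real.log u| / σ ≤ 0 := fun σ hσ u =>
    div_nonpos_of_nonpos_of_nonneg (neg_nonpos.mpr (abs_nonneg _)) hσ.le
  have hF_pos : ∀ σ u : ℝ, 0 < F σ u := fun σ u => Phi_pos _
  have hF_le : ∀ σ : ℝ, 0 < σ → ∀ u : ℝ, F σ u ≤ 1/2 := fun σ hσ u =>
    Phi_le_half (harg_nonpos σ hσ u)
  -- interval integrability of each F σ for σ > 0
  have hint : ∀ σ : ℝ, 0 < σ → IntervalIntegrable (F σ) volume 0 1 := by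
    intro σ hσ
    rw [intervalIntegrable_iff]
    have hconst : IntegrableOn (fun _ : ℝ => (1:ℝ)/2) (Set.uIoc (0:ℝ) 1) volume := by
      rw [Set.uIoc_of_le (by norm_num : (0:ℝ) ≤ 1)]
      exact (integrableOn_const_iff).mpr (Or.inr measure_Ioc_lt_top)
    refine hconst.mono' (hmeas σ) ?_
    · refine Filter.Eventually.of_forall fun u => ?_
      rw [Real.norm_eq_abs, abs_of_nonneg (hF_pos σ u).le]
      exact hF_le σ hσ u
  -- comparisons
  have hstrict : ∀ a b : ℝ, 0 < a → a < b → ∀ u : ℝ, u ∈ Set.Ioc (0:ℝ) 1 → u ≠ Real.exp μ →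
      F a u < F b u := by
    intro a b ha hab u hu hne
    apply Phi_strictMono
    have habs : 0 < |μ - Real.log u| := by
      rw [abs_pos, sub_ne_zero]
      intro h
      exact hne (by rw [h, Real.exp_log hu.1])
    rw [neg_div, neg_div, neg_lt_neg_iff]
    exact div_lt_div_of_pos_left habs ha hab
  have hle : ∀ a b : ℝ, 0 < a → a ≤ b → ∀ u : ℝ, F a u ≤ F b u := by
    intro a b ha hab u
    apply Phi_strictMono.monotone
    rw [neg_div, neg_div, neg_le_neg_iff]
    exact div_le_div_of_nonneg_left (abs_nonneg _) ha hab
  -- measure of Ioc 0 1 minus a point is positive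
  have hmeaspos : ∀ s : Set ℝ, Set.Ioc (0:ℝ) 1 \ {Real.exp μ} ⊆ s →
      0 < volume (s ∩ Set.Ioc (0:ℝ) 1) := by
    intro s hs
    have hsub : Set.Ioc (0:ℝ) 1 \ {Real.exp μ} ⊆ s ∩ Set.Ioc 0 1 :=
      fun x hx => ⟨hs hx, hx.1⟩
    refine lt_of_lt_of_le ?_ (measure_mono hsub)
    rw [measure_diff_null (measure_singleton _)]
    simp [Real.volume_Ioc]
  refine ⟨?_, ?_, ?_⟩
  · -- continuity
    intro σ0 hσ0
    apply ContinuousAt.continuousWithinAt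
    apply intervalIntegral.continuousAt_of_dominated_interval (bound := fun _ => (1:ℝ)/2)
      (Filter.Eventually.of_forall hmeas)
    · filter_upwards [isOpen_Ioi.mem_nhds hσ0] with σ hσ
      refine Filter.Eventually.of_forall fun u _ => ?_
      rw [Real.norm_eq_abs, abs_of_nonneg (hF_pos σ u).le]
      exact hF_le σ hσ u
    · exact intervalIntegrable_const
    · refine Filter.Eventually.of_forall fun u _ => ?_
      exact Phi_continuous.continuousAt.comp
        ((continuousAt_const.div continuousAt_id (ne_of_gt hσ0)))
  · -- strict monotonicity
    intro a ha b hb hab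
    simp only [Set.mem_Ioi] at ha hb
    have hdiff : (∫ u in (0:ℝ)..1, F b u) - ∫ u in (0:ℝ)..1, F a u
        = ∫ u in (0:ℝ)..1, (F b u - F a u) :=
      (intervalIntegral.integral_sub (hint b hb) (hint a ha)).symm
    have hpos : 0 < ∫ u in (0:ℝ)..1, (F b u - F a u) := by
      rw [intervalIntegral.integral_pos_iff_support_of_nonneg_ae'
        (Filter.Eventually.of_forall fun u => sub_nonneg.mpr (hle a b ha hab.le u))
        ((hint b hb).sub (hint a ha))]
      refine ⟨zero_lt_one, hmeaspos _ fun u hu => ?_⟩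
      exact sub_ne_zero.mpr (ne_of_gt (hstrict a b ha hab u hu.1 hu.2))
    have := hdiff ▸ hpos
    simpa only [hF] using by linarith
  · -- bounds
    intro σ hσ
    constructor
    · rw [intervalIntegral.integral_pos_iff_support_of_nonneg_ae'
        (Filter.Eventually.of_forall fun u => (hF_pos σ u).le) (hint σ hσ)]
      refine ⟨zero_lt_one, hmeaspos _ fun u _ => (hF_pos σ u).ne'⟩
    · have hpos : 0 < ∫ u in (0:ℝ)..1, ((1:ℝ)/2 - F σ u) := by
        rw [intervalIntegral.integral_pos_iff_support_of_nonneg_ae'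
          (Filter.Eventually.of_forall fun u => sub_nonneg.mpr (hF_le σ hσ u))
          (intervalIntegrable_const.sub (hint σ hσ))]
        refine ⟨zero_lt_one, hmeaspos _ fun u hu => ?_⟩
        refine sub_ne_zero.mpr (ne_of_gt ?_)
        apply Phi_lt_half
        have habs : 0 < |μ - Real.log u| := by
          rw [abs_pos, sub_ne_zero]
          intro h
          exact hu.2 (Set.mem_singleton_iff.mpr (by rw [h, Real.exp_log hu.1.1]))
        exact div_neg_of_neg_of_pos (neg_neg_of_pos habs) hσ
      have hsub : (∫ u in (0:ℝ)..1, ((1:ℝ)/2 - F σ u))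
          = (∫ u in (0:ℝ)..1, ((1:ℝ)/2)) - ∫ u in (0:ℝ)..1, F σ u :=
        intervalIntegral.integral_sub intervalIntegrable_const (hint σ hσ)
      rw [hsub, intervalIntegral.integral_const] at hpos
      simp only [smul_eq_mul, sub_zero, one_mul] at hpos
      linarith
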